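/- arXiv:2509.05024 — 2 statements merged into one kernel-verified Lean document; each statement's English description precedes it below -/
import Mathlib

section
/- Let f : ℕ+ → ℕ+ and n ∈ ℕ+, and define φ : ℤ → ℕ recursively by φ(x) = 0 for x < 1, φ(x) = 1 for 1 ≤ x ≤ f(n), and φ(x) = max over ⌈x/3⌉ ≤ y ≤ ⌊2x/3⌋ of (φ(y) + φ(x - f(x) - y)) + 1 otherwise. Then for all x ≥ f(n), φ(x) ≤ 6x/f(n) - 1. -/
/-!
With `c = f n`, strong induction on `x` gives the bound `c * φ x ≤ max (6x - c) c` for every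
integer `x`. For `x > c` every admissible split `y ∈ [x/3, 2x/3]`, `z = x - f x - y` has
`6y - c ≥ c`, so the two induction hypotheses add up to at most `6y + max (6z - c) c`, and
`6y + 6z - c ≤ 6x - c` as well as `6y + c ≤ 4x + c ≤ 6x - c`.
-/

section SeparationTree

variable (c : ℕ) (g φ : ℤ → ℕ)

theorem add_add_le_of_le_max {x y z a b : ℤ} (hcx : c < x) (hy : x ≤ 3 * y) (hy' : 3 * y ≤ 2 * x)
    (hz : z ≤ x - y) (ha : c * a ≤ max (6 * y - c) c) (hb : c * b ≤ max (6 * z - c) c) :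
    c * (a + b + 1) ≤ 6 * x - c := by
  rw [mul_add, mul_add, mul_one]
  omega

theorem Finset.sup_mul_add_one_le {ι : Type*} (s : Finset ι) (u : ι → ℕ) {B : ℤ}
    (hB : c ≤ B) (hu : ∀ i ∈ s, c * ((u i : ℤ) + 1) ≤ B) :
    c * ((s.sup u : ℕ) + 1 : ℤ) ≤ B := by
  refine Finset.sup_induction (p := fun m : ℕ => c * ((m : ℤ) + 1) ≤ B) (by simpa using hB)
    (fun m₁ h₁ m₂ h₂ => ?_) hu
  rcases le_total m₁ m₂ with h | h
  · rwa [sup_of_le_right h]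
  · rwa [sup_of_le_left h]

theorem mul_le_max_of_separation
    (h0 : ∀ x : ℤ, x < 1 → φ x = 0)
    (h1 : ∀ x : ℤ, 1 ≤ x → x ≤ c → φ x = 1)
    (h2 : ∀ x : ℤ, c < x →
      φ x = (Finset.Icc ((x + 2) / 3) ((2 * x) / 3)).sup (fun y => φ y + φ (x - g x - y)) + 1)
    (x : ℤ) : c * (φ x : ℤ) ≤ max (6 * x - c) c := by
  rcases lt_or_ge x 1 with hx | hx
  · simp [h0 x hx]
  rcases le_or_gt x c with hxc | hxc
  · simp [h1 x hx hxc]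
  refine le_max_of_le_left ?_
  rw [h2 x hxc, Nat.cast_add_one]
  refine Finset.sup_mul_add_one_le c _ _ (by omega) fun y hy => ?_
  rw [Finset.mem_Icc] at hy
  have hy_lt : y < x := by omega
  have hz_lt : x - g x - y < x := by omega
  push_cast
  exact add_add_le_of_le_max c hxc (by omega) (by omega) (by omega)
    (mul_le_max_of_separation h0 h1 h2 y) (mul_le_max_of_separation h0 h1 h2 (x - g x - y))
termination_by x.toNat

end SeparationTree

theorem stmt_0_general (f : ℕ → ℕ) (n : ℕ)
    (φ : ℤ → ℕ)
    (h0 : ∀ x : ℤ, x < 1 → φ x = 0)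
    (h1 : ∀ x : ℤ, 1 ≤ x → x ≤ (f n : ℤ) → φ x = 1)
    (h2 : ∀ x : ℤ, (f n : ℤ) < x →
      φ x = (Finset.Icc ((x + 2) / 3) ((2 * x) / 3)).sup
        (fun y => φ y + φ (x - (f x.toNat : ℤ) - y)) + 1) :
    ∀ x : ℤ, (f n : ℤ) ≤ x → (f n : ℤ) * (φ x + 1) ≤ 6 * x := by
  intro x hx
  have hmax := mul_le_max_of_separation (f n) (fun x => f x.toNat) φ h0 h1 h2 x
  rw [max_eq_left (by omega)] at hmax
  linarith

/-- If `f : ℕ → ℕ` takes positive values (encoding `f : ℕ+ → ℕ+`),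
`n` is positive, and `φ : ℤ → ℕ` satisfies the separation-tree recurrence
(with `⌈x/3⌉ ≤ y ≤ ⌊2x/3⌋` the balance range and `f x` vertices removed by the
separator), then for all `x ≥ f n` we have `φ x ≤ 6x / f n - 1`, stated in the
integer-division-free form `f n * (φ x + 1) ≤ 6 * x`. -/
theorem stmt_0 (f : ℕ → ℕ) (hf : ∀ m, 0 < f m) (n : ℕ) (hn : 0 < n)
    (φ : ℤ → ℕ)
    (h0 : ∀ x : ℤ, x < 1 → φ x = 0)
    (h1 : ∀ x : ℤ, 1 ≤ x → x ≤ (f n : ℤ) → φ x = 1)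
    (h2 : ∀ x : ℤ, (f n : ℤ) < x →
      φ x = (Finset.Icc ((x + 2) / 3) ((2 * x) / 3)).sup
        (fun y => φ y + φ (x - (f x.toNat : ℤ) - y)) + 1) :
    ∀ x : ℤ, (f n : ℤ) ≤ x → (f n : ℤ) * (φ x + 1) ≤ 6 * x :=
  stmt_0_general f n φ h0 h1 h2
end

section
/- Let G be a finite simple graph, and suppose V(G) = A ∪ B ∪ S with A, B, S pairwise disjoint, no edges between A and B, and the robber's current territory R (the set of vertices possibly occupied by an uncaught robber) satisfies R ⊆ A ∪ B ∪ S. If cops occupy all of S in the current round (catching the robber if it is in S) and remain on S in every subsequent round, then in every subsequent round the robber's territory is contained in A or contained in B — namely in whichever of A, B contained the robber's position when the cops occupied S. -/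
/-! With `S` occupied, the robber is confined to `A ∪ B`; a robber move either stays put or
follows an edge, and no edge joins `A` to `B`, so it can never cross from one side to the other. -/

section Separation

variable {V : Type*} {G : SimpleGraph V} {A B : Set V} {r : ℕ → V}

theorem mem_side_of_forall_ge_mem_union (hsep : ∀ a ∈ A, ∀ b ∈ B, ¬ G.Adj a b)
    (hmove : ∀ t, r (t + 1) = r t ∨ G.Adj (r t) (r (t + 1))) {t₀ : ℕ}
    (hunion : ∀ t ≥ t₀, r t ∈ A ∪ B) (hstart : r t₀ ∈ A) : ∀ t ≥ t₀, r t ∈ A := by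
  intro t ht
  induction t, ht using Nat.le_induction with
  | base => exact hstart
  | succ n _ ih =>
    rcases hmove n with hstay | hadj
    · exact hstay ▸ ih
    · exact (hunion (n + 1) (by omega)).resolve_right (hsep _ ih _ · hadj)

end Separation

theorem stmt_14_general {V : Type*} (G : SimpleGraph V) (A B S : Set V)
    (hcover : A ∪ B ∪ S = Set.univ)
    (hsep : ∀ a ∈ A, ∀ b ∈ B, ¬ G.Adj a b)
    (r : ℕ → V) (hmove : ∀ t, r (t + 1) = r t ∨ G.Adj (r t) (r (t + 1)))
    (t₀ : ℕ) (hnotcaught : ∀ t ≥ t₀, r t ∉ S) :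
    (r t₀ ∈ A → ∀ t ≥ t₀, r t ∈ A) ∧ (r t₀ ∈ B → ∀ t ≥ t₀, r t ∈ B) := by
  have hunion : ∀ t ≥ t₀, r t ∈ A ∪ B := fun t ht =>
    ((hcover ▸ Set.mem_univ (r t) : r t ∈ A ∪ B ∪ S)).resolve_right (hnotcaught t ht)
  exact ⟨mem_side_of_forall_ge_mem_union hsep hmove hunion,
    mem_side_of_forall_ge_mem_union (fun b hb a ha hba => hsep a ha b hb hba.symm) hmove
      fun t ht => (hunion t ht).symm⟩

/-- Suppose `V(G) = A ∪ B ∪ S` pairwise disjoint with no edges between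
`A` and `B`. If from time `t₀` on cops occupy all of `S` (so an uncaught robber is
never on `S` from time `t₀` on), then the robber remains forever in whichever of
`A`, `B` contained it at time `t₀`. -/
theorem stmt_14 {V : Type*} [Fintype V] (G : SimpleGraph V) (A B S : Set V)
    (hcover : A ∪ B ∪ S = Set.univ)
    (hAB : Disjoint A B) (hAS : Disjoint A S) (hBS : Disjoint B S)
    (hsep : ∀ a ∈ A, ∀ b ∈ B, ¬ G.Adj a b)
    (r : ℕ → V) (hmove : ∀ t, r (t + 1) = r t ∨ G.Adj (r t) (r (t + 1)))
    (t₀ : ℕ) (hnotcaught : ∀ t ≥ t₀, r t ∉ S) :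
    (r t₀ ∈ A → ∀ t ≥ t₀, r t ∈ A) ∧ (r t₀ ∈ B → ∀ t ≥ t₀, r t ∈ B) :=
  stmt_14_general G A B S hcover hsep r hmove t₀ hnotcaught
end
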